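/- If s ∈ S(t) and y ∈ P_v(t) (y is a predecessor of t with respect to source v in G), then d'(s,y) = d(s,u) + ω'(u,v) + d(v,y), and y is a predecessor of t with respect to source s in G', i.e., y ∈ P'_s(t). -/

import Mathlib

open scoped BigOperators

/-- A directed graph on vertex set `V` with positive real edge weights. -/
structure WDigraph (V : Type*) where
  /-- the edge relation -/
  E : V → V → Prop
  /-- the edge weights -/
  w : V → V → ℝ
  /-- weights of edges are positive -/
  pos : ∀ a b, E a b → 0 < w a b

namespace WDigraph

variable {V : Type*} [Fintype V] [DecidableEq V]

/-- `p` is a simple path from `s` to `t` in `G`: a nonempty list of pairwise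
distinct vertices starting at `s`, ending at `t`, consecutive vertices joined
by edges. (Since all weights are positive, every shortest path is simple, so
it suffices to consider simple paths throughout.) -/
def IsPath (G : WDigraph V) (s t : V) (p : List V) : Prop :=
  List.Chain' G.E p ∧ p.head? = some s ∧ p.getLast? = some t ∧ p.Nodup

/-- The total weight of a list of vertices (sum of the weights of consecutive pairs). -/
def pw (G : WDigraph V) : List V → ℝ
  | [] => 0
  | [_] => 0
  | a :: b :: r => G.w a b + G.pw (b :: r)

/-- `d(s,t)`: shortest-path distance from `s` to `t`, equal to `⊤` (infinity)
if `t` is unreachable from `s`. -/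
noncomputable def dist (G : WDigraph V) (s t : V) : EReal :=
  sInf ((fun p => (G.pw p : EReal)) '' {p | G.IsPath s t p})

/-- The set of shortest `s`-`t` paths in `G`. -/
def SP (G : WDigraph V) (s t : V) : Set (List V) :=
  {p | G.IsPath s t p ∧ (G.pw p : EReal) = G.dist s t}

/-- `σ_{st}`: the number of shortest `s`-`t` paths in `G`. -/
noncomputable def sigma (G : WDigraph V) (s t : V) : ℕ :=
  (G.SP s t).ncard

/-- `σ_{st}(v)`: the number of shortest `s`-`t` paths in `G` that contain `v`. -/
noncomputable def sigmaV (G : WDigraph V) (s t v : V) : ℕ :=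
  {p ∈ G.SP s t | v ∈ p}.ncard

/-- `σ_{st}(v,w)`: the number of shortest `s`-`t` paths in `G` using the edge `(v,w)`. -/
noncomputable def sigmaE (G : WDigraph V) (s t v w : V) : ℕ :=
  {p ∈ G.SP s t | [v, w] <:+: p}.ncard

/-- `P_s(t)`: the set of predecessors of `t` with respect to source `s`:
nodes `y` with `(y,t) ∈ E` and `d(s,y) + ω(y,t) = d(s,t) < ∞`. -/
def pred (G : WDigraph V) (s t : V) : Set V :=
  {y | G.E y t ∧ G.dist s y + (G.w y t : EReal) = G.dist s t ∧ G.dist s t < ⊤}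

/-- `δ_{s•}(v)`: Brandes's one-sided dependency of `s` on `v`
(a summand is `0` whenever its denominator is `0`, which is automatic since
in Lean division by zero yields zero). -/
noncomputable def delta (G : WDigraph V) (s v : V) : ℝ :=
  ∑ᶠ t ∈ {t : V | t ≠ s ∧ t ≠ v}, (G.sigmaV s t v : ℝ) / (G.sigma s t : ℝ)

/-- `c_B(v)`: the betweenness centrality of `v`. -/
noncomputable def bc (G : WDigraph V) (v : V) : ℝ :=
  ∑ᶠ s ∈ {s : V | s ≠ v}, G.delta s v

/-- `G'` is obtained from `G` by the incremental update `(u, v, ω'(u,v))`: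
either a new edge `(u,v) ∉ E` is inserted with positive weight, or the weight
of the existing edge `(u,v)` is decreased; all other edges and weights are
unchanged. (Positivity of all weights is part of the `WDigraph` structure.) -/
structure IsUpdate (G G' : WDigraph V) (u v : V) : Prop where
  /-- the updated edge is present in `G'` -/
  edge' : G'.E u v
  /-- `E' = E ∪ {(u,v)}` -/
  edge_iff : ∀ a b, G'.E a b ↔ G.E a b ∨ a = u ∧ b = v
  /-- `ω'` agrees with `ω` on all edges other than `(u,v)` -/
  weight_eq : ∀ a b, ¬(a = u ∧ b = v) → G'.w a b = G.w a b
  /-- either an insertion of a new edge, or a weight decrease of an existing one -/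
  insert_or_decrease : ¬ G.E u v ∨ (G.E u v ∧ G'.w u v < G.w u v)

/-- `S(t)`: the affected sources of `t`. -/
def affS (G G' : WDigraph V) (t : V) : Set V :=
  {s | G.dist s t > G'.dist s t ∨ G.sigma s t ≠ G'.sigma s t}

/-- `T(s)`: the affected targets of `s`. -/
def affT (G G' : WDigraph V) (s : V) : Set V :=
  {t | G.dist s t > G'.dist s t ∨ G.sigma s t ≠ G'.sigma s t}

/-- `Δ_{s•}(v) = Σ_{t ∈ T(s), t ≠ v} σ_{st}(v)/σ_{st}`, computed in `G`
(`0`-convention for zero denominators). -/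
noncomputable def Delta (G G' : WDigraph V) (s v : V) : ℝ :=
  ∑ᶠ t ∈ {t : V | t ∈ affT G G' s ∧ t ≠ v}, (G.sigmaV s t v : ℝ) / (G.sigma s t : ℝ)

/-- `Δ'_{s•}(v) = Σ_{t ∈ T(s), t ≠ v} σ'_{st}(v)/σ'_{st}`, computed in `G'`
(`0`-convention for zero denominators). -/
noncomputable def Delta' (G G' : WDigraph V) (s v : V) : ℝ :=
  ∑ᶠ t ∈ {t : V | t ∈ affT G G' s ∧ t ≠ v}, (G'.sigmaV s t v : ℝ) / (G'.sigma s t : ℝ)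

end WDigraph

/-!
Since `s ∈ S(t)`, some shortest `s`-`t` path of `G'` uses the edge `(u,v)`: otherwise every
shortest path of `G'` would be a path of `G` of the same weight, and neither `d(s,t)` nor
`σ_{st}` would change. Splitting that path at `(u,v)` gives
`d'(s,t) = d(s,u) + ω'(u,v) + d(v,t)`. Going through `(u,v)` gives
`d'(s,y) ≤ d(s,u) + ω'(u,v) + d(v,y)`, and the edge `(y,t)` gives
`d'(s,t) ≤ d'(s,y) + ω(y,t)`; as `d(v,t) = d(v,y) + ω(y,t)`, both inequalities are equalities,
which is the claim.
-/

namespace WDigraph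

variable {V : Type*}

section Paths

variable {G : WDigraph V} {s t : V}

lemma pw_cons_le {a : V} {p : List V} (hc : (a :: p).IsChain G.E) :
    G.pw p ≤ G.pw (a :: p) := by
  match p, hc with
  | [], _ => simp [pw]
  | b :: r, hc =>
    have hab := G.pos a b (List.isChain_cons_cons.1 hc).1
    simp only [pw]
    linarith

lemma pw_le_pw_append {l m : List V} (hc : (l ++ m).IsChain G.E) : G.pw m ≤ G.pw (l ++ m) := by
  induction l with
  | nil => exact le_rfl
  | cons a l ih => exact (ih hc.tail).trans (pw_cons_le hc)

lemma pw_nonneg {p : List V} (hc : p.IsChain G.E) : 0 ≤ G.pw p := by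
  simpa [pw] using pw_le_pw_append (m := []) (by simpa using hc)

lemma pw_append_cons (G : WDigraph V) {a b : V} (m : List V) :
    ∀ {l : List V}, l.getLast? = some a → G.pw (l ++ b :: m) = G.pw l + G.w a b + G.pw (b :: m)
  | [c], h => by
    obtain rfl : c = a := by simpa using h
    simp [pw]
  | c :: d :: l, h => by
    rw [List.getLast?_cons_cons] at h
    have ih := pw_append_cons G (b := b) m h
    simp only [List.cons_append] at ih ⊢
    simp only [pw, ih]
    ring

lemma pw_le_pw_of_chain (G₁ G₂ : WDigraph V) :
    ∀ {p : List V}, p.IsChain (fun a b => G₁.w a b ≤ G₂.w a b) → G₁.pw p ≤ G₂.pw p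
  | [], _ | [_], _ => le_rfl
  | a :: b :: r, h => by
    rw [List.isChain_cons_cons] at h
    exact add_le_add h.1 (pw_le_pw_of_chain G₁ G₂ h.2)

lemma pw_eq_pw_of_chain {G₁ G₂ : WDigraph V} {p : List V}
    (h : p.IsChain fun a b => G₁.w a b = G₂.w a b) : G₁.pw p = G₂.pw p :=
  le_antisymm (pw_le_pw_of_chain G₁ G₂ (h.imp fun _ _ => le_of_eq))
    (pw_le_pw_of_chain G₂ G₁ (h.imp fun _ _ => ge_of_eq))

lemma IsPath.exists_eq_cons {p : List V} (hp : G.IsPath s t p) : ∃ q, p = s :: q := by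
  obtain ⟨-, hs, -⟩ := hp
  cases p with
  | nil => simp at hs
  | cons a q => exact ⟨q, by simpa using hs⟩

lemma IsPath.prefix {l m : List V} {a : V} (hp : G.IsPath s t (l ++ a :: m)) :
    G.IsPath s a (l ++ [a]) := by
  obtain ⟨hc, hs, -, hn⟩ := hp
  refine ⟨hc.prefix ⟨m, by simp⟩, ?_, by simp, hn.sublist (by simp)⟩
  cases l <;> simpa using hs

lemma IsPath.suffix {l m : List V} {a : V} (hp : G.IsPath s t (l ++ a :: m)) :
    G.IsPath a t (a :: m) := by
  obtain ⟨hc, -, ht, hn⟩ := hp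
  rw [List.getLast?_append_cons] at ht
  exact ⟨hc.suffix ⟨l, rfl⟩, rfl, ht, hn.sublist (List.sublist_append_right l _)⟩

lemma exists_isPath_pw_le {p : List V} (hc : p.IsChain G.E) (hs : p.head? = some s)
    (ht : p.getLast? = some t) : ∃ q, G.IsPath s t q ∧ G.pw q ≤ G.pw p := by
  induction p generalizing s with
  | nil => simp at hs
  | cons a r ih =>
    obtain rfl : a = s := by simpa using hs
    cases r with
    | nil =>
      obtain rfl : a = t := by simpa using ht
      exact ⟨[a], ⟨List.isChain_singleton _, rfl, rfl, List.nodup_singleton _⟩, le_rfl⟩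
    | cons b r =>
      rw [List.getLast?_cons_cons] at ht
      obtain ⟨q, hq, hqw⟩ := ih hc.tail rfl ht
      have hle := pw_cons_le hc
      by_cases haq : a ∈ q
      · -- the walk `a :: q` revisits `a`: drop the cycle
        obtain ⟨l, m, rfl⟩ := List.append_of_mem haq
        exact ⟨a :: m, hq.suffix, by linarith [pw_le_pw_append hq.1 (l := l) (m := a :: m)]⟩
      · obtain ⟨q, rfl⟩ := hq.exists_eq_cons
        obtain ⟨hqc, -, hqt, hqn⟩ := hq
        have hab := (List.isChain_cons_cons.1 hc).1
        refine ⟨a :: b :: q, ⟨List.isChain_cons_cons.2 ⟨hab, hqc⟩, rfl, ?_,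
          List.nodup_cons.2 ⟨haq, hqn⟩⟩, ?_⟩
        · rwa [List.getLast?_cons_cons]
        · simp only [pw] at hqw ⊢
          linarith

lemma dist_le_pw {p : List V} (hp : G.IsPath s t p) : G.dist s t ≤ G.pw p :=
  sInf_le ⟨p, hp, rfl⟩

lemma dist_le_pw_of_chain {p : List V} (hc : p.IsChain G.E) (hs : p.head? = some s)
    (ht : p.getLast? = some t) : G.dist s t ≤ G.pw p := by
  obtain ⟨q, hq, hqw⟩ := exists_isPath_pw_le hc hs ht
  exact (dist_le_pw hq).trans (EReal.coe_le_coe_iff.2 hqw)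

lemma dist_nonneg : 0 ≤ G.dist s t :=
  le_sInf <| by
    rintro _ ⟨p, hp, rfl⟩
    exact EReal.coe_nonneg.2 (pw_nonneg hp.1)

lemma dist_ne_bot : G.dist s t ≠ ⊥ :=
  ne_bot_of_le_ne_bot EReal.zero_ne_bot dist_nonneg

lemma dist_self (v : V) : G.dist v v = 0 :=
  le_antisymm (by simpa [pw] using dist_le_pw (G := G) ⟨List.isChain_singleton v, rfl, rfl,
    List.nodup_singleton v⟩) dist_nonneg

lemma nonempty_SP [Finite V] (h : G.dist s t < ⊤) : (G.SP s t).Nonempty := by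
  have := Fintype.ofFinite V
  have hfin : {p | G.IsPath s t p}.Finite :=
    (List.finite_length_le V (Fintype.card V)).subset fun p hp => hp.2.2.2.length_le_card
  have hne : ((fun p => (G.pw p : EReal)) '' {p | G.IsPath s t p}).Nonempty := by
    by_contra hne
    rw [Set.not_nonempty_iff_eq_empty] at hne
    rw [dist, hne, sInf_empty] at h
    exact lt_irrefl _ h
  obtain ⟨p, hp, hpw⟩ := hne.csInf_mem (hfin.image _)
  exact ⟨p, hp, hpw⟩

lemma dist_lt_top_of_mem_SP {p : List V} (hp : p ∈ G.SP s t) : G.dist s t < ⊤ :=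
  hp.2 ▸ EReal.coe_lt_top _

lemma dist_le_dist_add_w_add_dist [Finite V] {u v : V} (z : V) (huv : G.E u v) :
    G.dist s z ≤ G.dist s u + G.w u v + G.dist v z := by
  rcases eq_or_ne (G.dist s u) ⊤ with hsu | hsu
  · rw [hsu, EReal.top_add_coe, EReal.top_add_of_ne_bot dist_ne_bot]
    exact le_top
  rcases eq_or_ne (G.dist v z) ⊤ with hvz | hvz
  · have hne : G.dist s u + G.w u v ≠ ⊥ :=
      EReal.add_ne_bot_iff.2 ⟨dist_ne_bot, EReal.coe_ne_bot _⟩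
    rw [hvz, EReal.add_top_of_ne_bot hne]
    exact le_top
  obtain ⟨p, hp, hpw⟩ := nonempty_SP (lt_top_iff_ne_top.2 hsu)
  obtain ⟨q, hq, hqw⟩ := nonempty_SP (lt_top_iff_ne_top.2 hvz)
  obtain ⟨q, rfl⟩ := hq.exists_eq_cons
  have hwalk := dist_le_pw_of_chain (G := G) (p := p ++ v :: q)
    (hp.1.append hq.1 fun a ha b hb => by
      rw [hp.2.2.1, Option.mem_some_iff] at ha
      rw [List.head?_cons, Option.mem_some_iff] at hb
      exact ha ▸ hb ▸ huv)
    (by rw [List.head?_append, hp.2.1]; rfl)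
    (by rw [List.getLast?_append_cons]; exact hq.2.2.1)
  rw [pw_append_cons G q hp.2.2.1] at hwalk
  rwa [← hpw, ← hqw, ← EReal.coe_add, ← EReal.coe_add]

lemma dist_le_dist_add_w [Finite V] {y : V} (hyt : G.E y t) :
    G.dist s t ≤ G.dist s y + G.w y t := by
  simpa [dist_self] using dist_le_dist_add_w_add_dist (s := s) t hyt

lemma ne_of_mem_pred {v y : V} (hy : y ∈ G.pred v t) : t ≠ v := by
  rintro rfl
  have hpos : (0 : EReal) < G.w y t := EReal.coe_pos.2 (G.pos y t hy.1)
  have := hy.2.1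
  rw [dist_self] at this
  exact (hpos.trans_le (le_add_of_nonneg_left dist_nonneg)).ne' this

end Paths

section Update

variable {G G' : WDigraph V} {u v s t : V}

lemma IsUpdate.isChain (h : IsUpdate G G' u v) {p : List V} (hc : p.IsChain G.E) :
    p.IsChain G'.E :=
  hc.imp fun a b hab => (h.edge_iff a b).2 (Or.inl hab)

lemma IsUpdate.pw_le (h : IsUpdate G G' u v) {p : List V} (hc : p.IsChain G.E) :
    G'.pw p ≤ G.pw p := by
  refine pw_le_pw_of_chain G' G (hc.imp fun a b hab => ?_)
  by_cases huv : a = u ∧ b = v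
  · obtain ⟨rfl, rfl⟩ := huv
    exact (h.insert_or_decrease.resolve_left (not_not.2 hab)).2.le
  · exact (h.weight_eq a b huv).le

lemma IsUpdate.dist_le (h : IsUpdate G G' u v) : G'.dist s t ≤ G.dist s t :=
  le_sInf <| by
    rintro _ ⟨p, hp, rfl⟩
    exact (dist_le_pw ⟨h.isChain hp.1, hp.2⟩).trans (EReal.coe_le_coe_iff.2 (h.pw_le hp.1))

lemma IsUpdate.dist_le_through_edge [Finite V] (h : IsUpdate G G' u v) (z : V) :
    G'.dist s z ≤ G.dist s u + G'.w u v + G.dist v z :=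
  (dist_le_dist_add_w_add_dist z h.edge').trans
    (add_le_add (add_le_add h.dist_le le_rfl) h.dist_le)

lemma IsUpdate.isPath_of_not_infix (h : IsUpdate G G' u v) {p : List V}
    (hp : G'.IsPath s t p) (huv : ¬[u, v] <:+: p) : G.IsPath s t p ∧ G'.pw p = G.pw p := by
  have hne : ∀ ⦃a b l₁ l₂⦄, p = l₁ ++ a :: b :: l₂ → ¬(a = u ∧ b = v) := by
    rintro a b l₁ l₂ rfl ⟨rfl, rfl⟩
    exact huv ⟨l₁, l₂, by simp⟩
  have hE := List.isChain_iff_forall_rel_of_append_cons_cons.1 hp.1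
  refine ⟨⟨List.isChain_iff_forall_rel_of_append_cons_cons.2 fun a b l₁ l₂ hp' =>
      ((h.edge_iff a b).1 (hE hp')).resolve_right (hne hp'), hp.2⟩,
    pw_eq_pw_of_chain (List.isChain_iff_forall_rel_of_append_cons_cons.2
      fun a b l₁ l₂ hp' => h.weight_eq a b (hne hp'))⟩

lemma IsUpdate.dist_eq_of_forall_not_infix [Finite V] (h : IsUpdate G G' u v)
    (hSP : ∀ p ∈ G'.SP s t, ¬[u, v] <:+: p) : G'.dist s t = G.dist s t := by
  refine le_antisymm h.dist_le ?_
  rcases eq_or_ne (G'.dist s t) ⊤ with htop | htop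
  · exact htop ▸ le_top
  obtain ⟨p, hp⟩ := nonempty_SP (lt_top_iff_ne_top.2 htop)
  obtain ⟨hpG, hpw⟩ := h.isPath_of_not_infix hp.1 (hSP p hp)
  calc G.dist s t ≤ G.pw p := dist_le_pw hpG
    _ = G'.dist s t := by rw [← hpw, hp.2]

lemma IsUpdate.SP_eq_of_forall_not_infix [Finite V] (h : IsUpdate G G' u v)
    (hSP : ∀ p ∈ G'.SP s t, ¬[u, v] <:+: p) : G'.SP s t = G.SP s t := by
  have hd := h.dist_eq_of_forall_not_infix hSP
  ext p
  constructor
  · intro hp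
    obtain ⟨hpG, hpw⟩ := h.isPath_of_not_infix hp.1 (hSP p hp)
    exact ⟨hpG, by rw [← hpw, hp.2, hd]⟩
  · intro hp
    have hp' : G'.IsPath s t p := ⟨h.isChain hp.1.1, hp.1.2⟩
    refine ⟨hp', le_antisymm ?_ (dist_le_pw hp')⟩
    calc (G'.pw p : EReal) ≤ G.pw p := EReal.coe_le_coe_iff.2 (h.pw_le hp.1.1)
      _ = G'.dist s t := by rw [hp.2, hd]

lemma IsUpdate.exists_mem_SP_infix_of_mem_affS [Finite V] (h : IsUpdate G G' u v)
    (hs : s ∈ affS G G' t) : ∃ p ∈ G'.SP s t, [u, v] <:+: p := by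
  by_contra! hSP
  rcases hs with hlt | hne
  · exact hlt.ne (h.dist_eq_of_forall_not_infix hSP)
  · exact hne (congrArg Set.ncard (h.SP_eq_of_forall_not_infix hSP)).symm

lemma IsUpdate.dist_eq_of_mem_SP_infix [Finite V] (h : IsUpdate G G' u v) {p : List V}
    (hp : p ∈ G'.SP s t) (huv : [u, v] <:+: p) :
    G'.dist s t = G.dist s u + G'.w u v + G.dist v t := by
  refine le_antisymm (h.dist_le_through_edge t) ?_
  obtain ⟨l, m, rfl⟩ := huv
  have hpu : G'.IsPath s t (l ++ u :: v :: m) := by simpa using hp.1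
  have hpv : G'.IsPath s t ((l ++ [u]) ++ v :: m) := by simpa using hp.1
  have hdisj : (l ++ [u]).Disjoint (v :: m) := List.disjoint_of_nodup_append hpv.2.2.2
  obtain ⟨hsu, hsuw⟩ := h.isPath_of_not_infix hpu.prefix
    fun hi => hdisj (hi.subset (by simp)) List.mem_cons_self
  obtain ⟨hvt, hvtw⟩ := h.isPath_of_not_infix hpv.suffix
    fun hi => hdisj (List.mem_append_right _ List.mem_cons_self) (hi.subset (by simp))
  calc G.dist s u + G'.w u v + G.dist v t ≤ G.pw (l ++ [u]) + G'.w u v + G.pw (v :: m) :=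
        add_le_add (add_le_add (dist_le_pw hsu) le_rfl) (dist_le_pw hvt)
    _ = G'.pw ((l ++ [u]) ++ v :: m) := by
        rw [pw_append_cons G' (a := u) m (by simp), hsuw, hvtw]
        push_cast
        rfl
    _ = G'.dist s t := by simpa using hp.2

end Update

end WDigraph

namespace WDigraph

variable {V : Type*} [Fintype V] [DecidableEq V]

/-- If `s ∈ S(t)` and `y ∈ P_v(t)` (a predecessor of `t` with respect
to source `v` in `G`), then `d'(s,y) = d(s,u) + ω'(u,v) + d(v,y)`, and `y` is a
predecessor of `t` with respect to source `s` in `G'`, i.e. `y ∈ P'_s(t)`. -/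
theorem pred_mem_pred'_of_affS (G G' : WDigraph V) (u v : V)
    (h : IsUpdate G G' u v) (s t y : V) (hs : s ∈ affS G G' t)
    (hy : y ∈ G.pred v t) :
    G'.dist s y = G.dist s u + (G'.w u v : EReal) + G.dist v y ∧
      y ∈ G'.pred s t := by
  have hwyt : G'.w y t = G.w y t := h.weight_eq y t fun huv => ne_of_mem_pred hy huv.2
  obtain ⟨hyt, hdyt, -⟩ := hy
  have hyt' : G'.E y t := (h.edge_iff y t).2 (Or.inl hyt)
  obtain ⟨p, hp, huv⟩ := h.exists_mem_SP_infix_of_mem_affS hs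
  have hst : G'.dist s t = G.dist s u + G'.w u v + G.dist v y + G.w y t := by
    rw [h.dist_eq_of_mem_SP_infix hp huv, add_assoc _ (G.dist v y), hdyt]
  have hsy : G'.dist s y = G.dist s u + G'.w u v + G.dist v y := by
    refine le_antisymm (h.dist_le_through_edge y) ?_
    rw [← (EReal.addLECancellable_coe (G.w y t)).add_le_add_iff_right, ← hst, ← hwyt]
    exact dist_le_dist_add_w hyt'
  exact ⟨hsy, hyt', by rw [hsy, hwyt, hst], dist_lt_top_of_mem_SP hp⟩

end WDigraph
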